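/- arXiv:1301.5728 — 4 statements merged into one kernel-verified Lean document; each statement's English description precedes it below -/
import Mathlib

section
/- Let N ≥ 1, let G : ℝ^N → ℝ be twice continuously differentiable and let F : ℝ^N → ℝ be continuously differentiable. If u* ∈ ℝ^N is a density-evolution fixed point, i.e. u* = ∇F(∇G(u*)), then ∇V(u*) = 0, so u* is a stationary point of the potential V. -/
/-!
Write `g = ∇G`. Differentiating `V`, the term `⟪h, g u⟫` coming from `⟪w, g w⟫` cancels against
`DG(u) h = ⟪g u, h⟫`, leaving `DV(u) h = ⟪u - ∇F(g u), Dg(u) h⟫`, which vanishes when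
`u = ∇F(g u)`.
-/

open scoped InnerProductSpace

section Potential

variable {E : Type*} [NormedAddCommGroup E] [InnerProductSpace ℝ E] [CompleteSpace E]

theorem ContDiff.gradient {f : E → ℝ} {n : WithTop ℕ∞} (hf : ContDiff ℝ (n + 1) f) :
    ContDiff ℝ n (gradient f) :=
  (InnerProductSpace.toDual ℝ E).symm.contDiff.comp (hf.fderiv_right le_rfl)

theorem HasFDerivAt.inner_sub_sub_comp {F G : E → ℝ} {g : E → E} {g' : E →L[ℝ] E} {u f : E}
    (hg : HasFDerivAt g g' u) (hG : HasGradientAt G (g u) u) (hF : HasGradientAt F f (g u)) :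
    HasFDerivAt (fun w => ⟪w, g w⟫_ℝ - G w - F (g w)) ((innerSL ℝ (u - f)).comp g') u := by
  refine ((((hasFDerivAt_id u).inner ℝ hg).sub hG.hasFDerivAt).sub
    (hF.hasFDerivAt.comp u hg)).congr_fderiv ?_
  refine ContinuousLinearMap.ext fun (h : E) => ?_
  simp only [ContinuousLinearMap.coe_comp, Function.comp_apply, innerSL_apply_apply,
    FunLike.coe_sub, Pi.sub_apply, ContinuousLinearMap.prod_apply,
    ContinuousLinearMap.coe_id', id_eq, fderivInnerCLM_apply,
    InnerProductSpace.toDual_apply_apply, inner_sub_left, real_inner_comm (g u) h]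
  ring

end Potential

theorem stmt_2_general (N : ℕ)
    (F G : EuclideanSpace ℝ (Fin N) → ℝ)
    (hG : ContDiff ℝ 2 G) (hF : ContDiff ℝ 1 F)
    (ustar : EuclideanSpace ℝ (Fin N))
    (hfix : ustar = gradient F (gradient G ustar)) :
    gradient (fun w => ⟪w, gradient G w⟫_ℝ - G w - F (gradient G w)) ustar = 0 := by
  have hgradG : ContDiff ℝ 1 (gradient G) := hG.gradient
  have hV := (hgradG.differentiable one_ne_zero ustar).hasFDerivAt.inner_sub_sub_comp
    (hG.differentiable two_ne_zero ustar).hasGradientAt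
    (hF.differentiable one_ne_zero (gradient G ustar)).hasGradientAt
  rw [← hfix, sub_self, map_zero, ContinuousLinearMap.zero_comp] at hV
  rw [hV.hasGradientAt.gradient, map_zero]

/-- For `G` twice continuously differentiable and `F` continuously
differentiable on `ℝ^N`, if `u*` is a density-evolution fixed point, i.e.
`u* = ∇F(∇G(u*))`, then `u*` is a stationary point of the potential
`V(u) = ⟪u, ∇G(u)⟫ − G(u) − F(∇G(u))`, i.e. `∇V(u*) = 0`. -/
theorem stmt_2 (N : ℕ) (hN : 1 ≤ N)
    (F G : EuclideanSpace ℝ (Fin N) → ℝ)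
    (hG : ContDiff ℝ 2 G) (hF : ContDiff ℝ 1 F)
    (ustar : EuclideanSpace ℝ (Fin N))
    (hfix : ustar = gradient F (gradient G ustar)) :
    gradient (fun w => ⟪w, gradient G w⟫_ℝ - G w - F (gradient G w)) ustar = 0 :=
  stmt_2_general N F G hG hF ustar hfix
end

section
/- Let N ≥ 1, K ≥ 1, let W be a nonnegative integer, let F : ℝ^N → ℝ be thrice continuously differentiable, and let v : ℝ^K → ℝ^N be twice continuously differentiable. Fix x ∈ ℝ^K and set σ² = (1/(2W+1)) Σ_{m=−W}^{W} m². Then, as L → ∞, L² · [ (1/(2W+1)^K) Σ_{m ∈ [−W,W]^K ∩ ℤ^K} ∇F(v(x + m/L)) − ∇F(v(x)) − (σ²/(2L²)) Σ_{α=1}^{K} ( Hess F(v(x)) · ∂²v/∂(x^α)²(x) + D³F(v(x))[∂v/∂x^α(x), ∂v/∂x^α(x)] ) ] → 0, where the a-th component of D³F(v)[w, w] is Σ_{b,c} ∂³F/∂v_a∂v_b∂v_c(v) w_b w_c. -/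
/-!
Write `G = ∇F ∘ v`. For each lattice point `m` of the window, the second-order Taylor expansion
of `G` at `x` along `m / L` has remainder `o(L⁻²)`. Averaging over the window, which is symmetric
under `m ↦ -m` and under flipping the sign of a single coordinate, kills the first-order term and
all mixed second moments `⟨m_α m_β⟩`, `α ≠ β`, while `⟨m_α²⟩ = σ²`. What remains is
`(σ² / 2L²) ∑_α D²G(x)(e_α, e_α)` over the coordinate vectors `e_α`, and the second-order chain
rule splits `D²G(x)(e_α, e_α)` into the Hessian term and the third-derivative term.
-/

open Filter Topology

theorem tendsto_sq_smul_taylor_two_atTop {E G : Type*} [NormedAddCommGroup E] [NormedSpace ℝ E]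
    [NormedAddCommGroup G] [NormedSpace ℝ G] {g : E → G} {x : E} (hg : Differentiable ℝ g)
    (hg' : DifferentiableAt ℝ (fderiv ℝ g) x) (w : E) :
    Tendsto (fun L : ℝ => L ^ 2 • (g (x + L⁻¹ • w) - g x - L⁻¹ • fderiv ℝ g x w
      - (2 * L ^ 2)⁻¹ • fderiv ℝ (fderiv ℝ g) x w w)) atTop (𝓝 0) := by
  have hTaylor := convex_univ.taylor_approx_two_segment (fun y _ => (hg y).hasFDerivAt)
    (Set.mem_univ x) (by rw [interior_univ]; exact hg'.hasFDerivAt.hasFDerivWithinAt)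
    (v := 0) (w := w) (by simp) (by simp)
  refine (hTaylor.tendsto_inv_smul_nhds_zero.comp tendsto_inv_atTop_nhdsGT_zero).congr' ?_
  filter_upwards [eventually_ne_atTop 0] with L hL
  simp only [Function.comp_apply, smul_zero, add_zero, map_zero, zero_apply, sub_zero, inv_pow,
    inv_inv]
  congr 2
  field_simp

theorem fderiv_fderiv_comp_apply {E F G : Type*} [NormedAddCommGroup E] [NormedSpace ℝ E]
    [NormedAddCommGroup F] [NormedSpace ℝ F] [NormedAddCommGroup G] [NormedSpace ℝ G]
    {φ : F → G} {v : E → F} {x : E} (hφ : Differentiable ℝ φ)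
    (hφ' : DifferentiableAt ℝ (fderiv ℝ φ) (v x)) (hv : Differentiable ℝ v)
    (hv' : DifferentiableAt ℝ (fderiv ℝ v) x) (e₁ e₂ : E) :
    fderiv ℝ (fderiv ℝ (φ ∘ v)) x e₁ e₂ =
      fderiv ℝ φ (v x) (fderiv ℝ (fderiv ℝ v) x e₁ e₂)
        + fderiv ℝ (fderiv ℝ φ) (v x) (fderiv ℝ v x e₁) (fderiv ℝ v x e₂) := by
  have hfderiv : fderiv ℝ (φ ∘ v) = fun y => (fderiv ℝ φ (v y)).comp (fderiv ℝ v y) :=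
    funext fun y => fderiv_comp y (hφ (v y)) (hv y)
  rw [hfderiv, fderiv_clm_comp (c := fun y => fderiv ℝ φ (v y)) (hφ'.comp x (hv x)) hv',
    fderiv_fun_comp x hφ' (hv x)]
  simp

theorem Int.sum_Icc_neg_cast_eq_zero (W : ℕ) : ∑ j ∈ Finset.Icc (-(W : ℤ)) W, (j : ℝ) = 0 := by
  have h : ∑ j ∈ Finset.Icc (-(W : ℤ)) W, (j : ℝ) = ∑ j ∈ Finset.Icc (-(W : ℤ)) W, ((-j : ℤ) : ℝ) :=
    Finset.sum_nbij' (- ·) (- ·) (by intro j; simp; omega) (by intro j; simp; omega)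
      (by simp) (by simp) (by simp)
  push_cast at h
  rw [Finset.sum_neg_distrib] at h
  linarith

theorem Fintype.sum_piFinset_apply_mul_apply_of_ne {ι κ R : Type*} [Fintype ι] [DecidableEq ι]
    [CommSemiring R] (s : Finset κ) (f g : κ → R) (hf : ∑ j ∈ s, f j = 0) {α β : ι}
    (hαβ : α ≠ β) : ∑ m ∈ Fintype.piFinset fun _ : ι => s, f (m α) * g (m β) = 0 := by
  have hprod : ∀ m : ι → κ, f (m α) * g (m β)
      = ∏ i, (if i = α then f (m i) else 1) * (if i = β then g (m i) else 1) := by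
    intro m
    rw [Finset.prod_mul_distrib, Finset.prod_ite_eq', Finset.prod_ite_eq']
    simp
  rw [Finset.sum_congr rfl fun m _ => hprod m, Finset.sum_prod_piFinset s
    (fun i j => (if i = α then f j else 1) * (if i = β then g j else 1))]
  exact Finset.prod_eq_zero (Finset.mem_univ α) (by simp [hαβ, hf])

noncomputable def couplingWindow (ι : Type*) [Fintype ι] [DecidableEq ι] (W : ℕ) : Finset (ι → ℤ) :=
  Finset.Icc (fun _ => -(W : ℤ)) (fun _ => (W : ℤ))

noncomputable def couplingVariance (W : ℕ) : ℝ :=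
  (2 * (W : ℝ) + 1)⁻¹ * ∑ m ∈ Finset.Icc (-(W : ℤ)) (W : ℤ), (m : ℝ) ^ 2

section CouplingWindow

variable {ι : Type*} [Fintype ι] [DecidableEq ι] (W : ℕ)

theorem card_couplingWindow : (couplingWindow ι W).card = (2 * W + 1) ^ Fintype.card ι := by
  rw [couplingWindow, Pi.card_Icc, Finset.prod_const, Int.card_Icc]
  congr 1
  omega

theorem sum_couplingWindow_apply (α : ι) : ∑ m ∈ couplingWindow ι W, (m α : ℝ) = 0 := by
  rw [couplingWindow, Pi.Icc_eq, Fintype.sum_piFinset_apply (fun j : ℤ => (j : ℝ)),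
    Int.sum_Icc_neg_cast_eq_zero, smul_zero]

theorem sum_couplingWindow_apply_mul_apply_of_ne {α β : ι} (hαβ : α ≠ β) :
    ∑ m ∈ couplingWindow ι W, (m α : ℝ) * (m β : ℝ) = 0 :=
  Fintype.sum_piFinset_apply_mul_apply_of_ne _ _ _ (Int.sum_Icc_neg_cast_eq_zero W) hαβ

theorem inv_mul_sum_couplingWindow_apply_sq (α : ι) :
    ((2 * (W : ℝ) + 1) ^ Fintype.card ι)⁻¹ * ∑ m ∈ couplingWindow ι W, (m α : ℝ) ^ 2
      = couplingVariance W := by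
  obtain ⟨k, hk⟩ := Nat.exists_eq_add_one_of_ne_zero (Fintype.card_pos_iff.mpr ⟨α⟩).ne'
  rw [couplingWindow, Pi.Icc_eq, Fintype.sum_piFinset_apply (fun j : ℤ => (j : ℝ) ^ 2),
    nsmul_eq_mul, Int.card_Icc, couplingVariance, hk, Nat.add_sub_cancel]
  rw [show ((W : ℤ) + 1 - -(W : ℤ)).toNat = 2 * W + 1 by omega]
  push_cast
  field_simp
  ring

end CouplingWindow

section CouplingAverage

variable {ι E F : Type*} [Fintype ι] [DecidableEq ι] [NormedAddCommGroup E] [NormedSpace ℝ E]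
  [NormedAddCommGroup F] [NormedSpace ℝ F] (e : ι → E) (W : ℕ)

theorem sum_couplingWindow_smul_eq_zero :
    ∑ m ∈ couplingWindow ι W, ∑ α, (m α : ℝ) • e α = 0 := by
  rw [Finset.sum_comm]
  exact Finset.sum_eq_zero fun α _ => by
    rw [← Finset.sum_smul, sum_couplingWindow_apply, zero_smul]

theorem inv_smul_sum_couplingWindow_bilinear (B : E →L[ℝ] E →L[ℝ] F) :
    ((2 * (W : ℝ) + 1) ^ Fintype.card ι)⁻¹ •
        ∑ m ∈ couplingWindow ι W, B (∑ α, (m α : ℝ) • e α) (∑ α, (m α : ℝ) • e α)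
      = couplingVariance W • ∑ α, B (e α) (e α) := by
  have hexpand : ∀ m : ι → ℤ, B (∑ α, (m α : ℝ) • e α) (∑ α, (m α : ℝ) • e α)
      = ∑ α, ∑ β, ((m α : ℝ) * m β) • B (e α) (e β) := by
    intro m
    simp only [map_sum, map_smul, sum_apply, FunLike.coe_smul,
      Pi.smul_apply, Finset.smul_sum, smul_smul]
    exact Finset.sum_comm.trans (by simp only [mul_comm])
  have hdiag : ∀ α, ∑ β, (∑ m ∈ couplingWindow ι W, (m α : ℝ) * m β) • B (e α) (e β)
      = (∑ m ∈ couplingWindow ι W, (m α : ℝ) ^ 2) • B (e α) (e α) := by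
    intro α
    rw [Finset.sum_eq_single α (fun β _ hβα => by
      rw [sum_couplingWindow_apply_mul_apply_of_ne W (Ne.symm hβα), zero_smul])
      (by simp)]
    simp only [sq]
  simp only [hexpand]
  rw [Finset.sum_comm]
  simp only [← Finset.sum_smul, Finset.sum_comm (s := couplingWindow ι W), hdiag,
    Finset.smul_sum, smul_smul, inv_mul_sum_couplingWindow_apply_sq]

theorem tendsto_sq_smul_couplingAverage_sub {G : E → F} {x : E} (hG : Differentiable ℝ G)
    (hG' : DifferentiableAt ℝ (fderiv ℝ G) x) :
    Tendsto (fun L : ℝ => L ^ 2 •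
      (((2 * (W : ℝ) + 1) ^ Fintype.card ι)⁻¹ •
          ∑ m ∈ couplingWindow ι W, G (x + L⁻¹ • ∑ α, (m α : ℝ) • e α)
        - G x
        - (couplingVariance W / (2 * L ^ 2)) • ∑ α, fderiv ℝ (fderiv ℝ G) x (e α) (e α)))
      atTop (𝓝 0) := by
  set c : ℝ := ((2 * (W : ℝ) + 1) ^ Fintype.card ι)⁻¹
  set w : (ι → ℤ) → E := fun m => ∑ α, (m α : ℝ) • e α
  set B := fderiv ℝ (fderiv ℝ G) x
  have hlim := (tendsto_finsetSum (couplingWindow ι W) fun m _ =>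
    tendsto_sq_smul_taylor_two_atTop hG hG' (w m)).const_smul c
  rw [Finset.sum_const_zero, smul_zero] at hlim
  refine hlim.congr fun L => ?_
  have hcard : c * (couplingWindow ι W).card = 1 := by
    rw [card_couplingWindow]
    push_cast
    exact inv_mul_cancel₀ (by positivity)
  have hlin : ∑ m ∈ couplingWindow ι W, fderiv ℝ G x (w m) = 0 := by
    rw [← map_sum, sum_couplingWindow_smul_eq_zero, map_zero]
  have hquad := inv_smul_sum_couplingWindow_bilinear e W B
  calc c • ∑ m ∈ couplingWindow ι W, L ^ 2 • (G (x + L⁻¹ • w m) - G x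
        - L⁻¹ • fderiv ℝ G x (w m) - (2 * L ^ 2)⁻¹ • B (w m) (w m))
      = L ^ 2 • (c • ∑ m ∈ couplingWindow ι W, G (x + L⁻¹ • w m)
          - (c * (couplingWindow ι W).card) • G x
          - (c * L⁻¹) • ∑ m ∈ couplingWindow ι W, fderiv ℝ G x (w m)
          - (2 * L ^ 2)⁻¹ • (c • ∑ m ∈ couplingWindow ι W, B (w m) (w m))) := by
        simp only [← Finset.smul_sum, Finset.sum_sub_distrib, Finset.sum_const]
        module
    _ = _ := by
        rw [hcard, hlin, hquad]
        module

end CouplingAverage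

theorem stmt_9_general (N K : ℕ) (W : ℕ)
    (F : EuclideanSpace ℝ (Fin N) → ℝ) (hF : ContDiff ℝ 3 F)
    (v : EuclideanSpace ℝ (Fin K) → EuclideanSpace ℝ (Fin N))
    (hv : ContDiff ℝ 2 v)
    (x : EuclideanSpace ℝ (Fin K)) (σ2 : ℝ)
    (hσ : σ2 = (2 * (W : ℝ) + 1)⁻¹ * ∑ m ∈ Finset.Icc (-(W : ℤ)) (W : ℤ), (m : ℝ) ^ 2) :
    Tendsto
      (fun L : ℝ => (L ^ 2) •
        (((2 * (W : ℝ) + 1) ^ K)⁻¹ •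
            ∑ m ∈ Finset.Icc (fun _ : Fin K => -(W : ℤ)) (fun _ : Fin K => (W : ℤ)),
              gradient F (v (x + (WithLp.equiv 2 (Fin K → ℝ)).symm
                (fun α : Fin K => (m α : ℝ) / L)))
          - gradient F (v x)
          - (σ2 / (2 * L ^ 2)) •
              ∑ α : Fin K,
                (fderiv ℝ (gradient F) (v x)
                    (iteratedFDeriv ℝ 2 v x
                      ![EuclideanSpace.single α 1, EuclideanSpace.single α 1])
                  + fderiv ℝ
                      (fun y => fderiv ℝ (gradient F) y
                        (fderiv ℝ v x (EuclideanSpace.single α 1)))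
                      (v x) (fderiv ℝ v x (EuclideanSpace.single α 1)))))
      atTop (nhds 0) := by
  have hgrad : ContDiff ℝ 2 (gradient F) :=
    (InnerProductSpace.toDual ℝ _).symm.contDiff.comp (hF.fderiv_right (by norm_num))
  have hG : ContDiff ℝ 2 (gradient F ∘ v) := hgrad.comp hv
  have hlim := tendsto_sq_smul_couplingAverage_sub (fun α : Fin K => EuclideanSpace.single α 1) W
    (hG.differentiable two_ne_zero) ((hG.fderiv_right le_rfl).differentiable one_ne_zero x)
  rw [Fintype.card_fin, show couplingVariance W = σ2 from hσ.symm] at hlim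
  have hpoint : ∀ (L : ℝ) (m : Fin K → ℤ),
      (WithLp.equiv 2 (Fin K → ℝ)).symm (fun α => (m α : ℝ) / L)
        = L⁻¹ • ∑ α, (m α : ℝ) • EuclideanSpace.single α (1 : ℝ) := by
    intro L m
    ext i
    simp [div_eq_inv_mul, Pi.single_apply]
  have hhess : ∀ u, fderiv ℝ (fderiv ℝ (gradient F ∘ v)) x u u
      = fderiv ℝ (gradient F) (v x) (iteratedFDeriv ℝ 2 v x ![u, u])
        + fderiv ℝ (fun y => fderiv ℝ (gradient F) y (fderiv ℝ v x u)) (v x) (fderiv ℝ v x u) := by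
    intro u
    have hDgrad := (hgrad.fderiv_right le_rfl).differentiable one_ne_zero
    rw [fderiv_fderiv_comp_apply (hgrad.differentiable two_ne_zero) (hDgrad (v x))
      (hv.differentiable two_ne_zero) ((hv.fderiv_right le_rfl).differentiable one_ne_zero x),
      iteratedFDeriv_two_apply, fderiv_clm_apply (hDgrad (v x)) (differentiableAt_const _)]
    simp
  simpa only [couplingWindow, hpoint, hhess, Function.comp_apply] using hlim

/-- Continuum approximation of the coupled density-evolution
update.  For `F : ℝ^N → ℝ` thrice continuously differentiable and a twice
continuously differentiable profile `v : ℝ^K → ℝ^N`, with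
`σ² = (1/(2W+1)) ∑_{m=−W}^{W} m²`, the coupling average of `∇F` expands as
`(1/(2W+1)^K) ∑_m ∇F(v(x+m/L)) = ∇F(v(x)) + (σ²/(2L²)) ∑_α ( Hess F(v(x)) ∂²_α v
+ D³F(v(x))[∂_α v, ∂_α v] ) + o(L^{−2})` as `L → ∞`, where
`Hess F(y) = D(∇F)(y)` and `D³F(y)[w,w] = D(z ↦ D(∇F)(z) w)(y) w`. -/
theorem stmt_9 (N K : ℕ) (hN : 1 ≤ N) (hK : 1 ≤ K) (W : ℕ)
    (F : EuclideanSpace ℝ (Fin N) → ℝ) (hF : ContDiff ℝ 3 F)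
    (v : EuclideanSpace ℝ (Fin K) → EuclideanSpace ℝ (Fin N))
    (hv : ContDiff ℝ 2 v)
    (x : EuclideanSpace ℝ (Fin K)) (σ2 : ℝ)
    (hσ : σ2 = (2 * (W : ℝ) + 1)⁻¹ * ∑ m ∈ Finset.Icc (-(W : ℤ)) (W : ℤ), (m : ℝ) ^ 2) :
    Tendsto
      (fun L : ℝ => (L ^ 2) •
        (((2 * (W : ℝ) + 1) ^ K)⁻¹ •
            ∑ m ∈ Finset.Icc (fun _ : Fin K => -(W : ℤ)) (fun _ : Fin K => (W : ℤ)),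
              gradient F (v (x + (WithLp.equiv 2 (Fin K → ℝ)).symm
                (fun α : Fin K => (m α : ℝ) / L)))
          - gradient F (v x)
          - (σ2 / (2 * L ^ 2)) •
              ∑ α : Fin K,
                (fderiv ℝ (gradient F) (v x)
                    (iteratedFDeriv ℝ 2 v x
                      ![EuclideanSpace.single α 1, EuclideanSpace.single α 1])
                  + fderiv ℝ
                      (fun y => fderiv ℝ (gradient F) y
                        (fderiv ℝ v x (EuclideanSpace.single α 1)))
                      (v x) (fderiv ℝ v x (EuclideanSpace.single α 1)))))
      atTop (nhds 0) :=
  stmt_9_general N K W F hF v hv x σ2 hσ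
end

section
/- Let N ≥ 1, let G : ℝ^N → ℝ be twice continuously differentiable and F : ℝ^N → ℝ differentiable, let U ⊆ ℝ^N be open, and let Φ : U → ℝ^N be differentiable with ∇G(Φ(ṽ)) = ṽ for all ṽ ∈ U (Φ is a right inverse of ∇G). Then for all ṽ ∈ U, ∇(V ∘ Φ)(ṽ) = Φ(ṽ) − ∇F(ṽ); i.e. the vector field A(ṽ) = Φ(ṽ) − ∇F(ṽ) appearing in the continuum density-evolution equation is conservative, with potential V ∘ Φ. -/
open scoped InnerProductSpace

/-! On `U` we have `∇G ∘ Φ = id`, so `V ∘ Φ` coincides near each point with the Legendre-type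
function `w ↦ ⟪Φ w, w⟫ - G (Φ w) - F w`. In the derivative of `⟪Φ w, w⟫ - G (Φ w)` the two terms
containing `DΦ` are `⟪DΦ h, v⟫` and `-⟪∇G (Φ v), DΦ h⟫`, which cancel because `∇G (Φ v) = v`;
what is left is `⟪Φ v, h⟫`. -/

section Legendre

variable {E : Type*} [NormedAddCommGroup E] [InnerProductSpace ℝ E] [CompleteSpace E]

theorem hasGradientAt_inner_sub_comp_of_hasGradientAt {G : E → ℝ} {Φ : E → E} {v : E}
    (hΦ : DifferentiableAt ℝ Φ v) (hG : HasGradientAt G v (Φ v)) :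
    HasGradientAt (fun w => ⟪Φ w, w⟫_ℝ - G (Φ w)) (Φ v) v := by
  rw [hasGradientAt_iff_hasFDerivAt] at hG ⊢
  have hinner := hΦ.hasFDerivAt.inner ℝ (hasFDerivAt_id v)
  refine (hinner.sub (hG.comp v hΦ.hasFDerivAt)).congr_fderiv ?_
  ext h
  simp [fderivInnerCLM_apply, real_inner_comm v]

end Legendre

theorem stmt_10_general (N : ℕ)
    (F G : EuclideanSpace ℝ (Fin N) → ℝ)
    (hG : ContDiff ℝ 2 G) (hF : Differentiable ℝ F)
    (U : Set (EuclideanSpace ℝ (Fin N))) (hU : IsOpen U)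
    (Φ : EuclideanSpace ℝ (Fin N) → EuclideanSpace ℝ (Fin N))
    (hΦdiff : ∀ v ∈ U, DifferentiableAt ℝ Φ v)
    (hΦ : ∀ v ∈ U, gradient G (Φ v) = v) :
    ∀ v ∈ U,
      gradient (fun w =>
          ⟪Φ w, gradient G (Φ w)⟫_ℝ - G (Φ w) - F (gradient G (Φ w))) v
        = Φ v - gradient F v := by
  intro v hv
  have hGv : HasGradientAt G v (Φ v) := by
    simpa only [hΦ v hv] using ((hG.differentiable two_ne_zero) (Φ v)).hasGradientAt
  have hpotential :
      HasGradientAt (fun w => ⟪Φ w, w⟫_ℝ - G (Φ w) - F w) (Φ v - gradient F v) v := by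
    rw [hasGradientAt_iff_hasFDerivAt, map_sub]
    exact (hasGradientAt_inner_sub_comp_of_hasGradientAt (hΦdiff v hv) hGv).hasFDerivAt.sub
      (hF v).hasGradientAt.hasFDerivAt
  refine (hpotential.congr_of_eventuallyEq ?_).gradient
  filter_upwards [hU.mem_nhds hv] with w hw
  rw [hΦ w hw]

/-- Let `G` be twice continuously differentiable, `F`
differentiable, `U` open and `Φ` a differentiable right inverse of `∇G` on `U`
(`∇G(Φ(ṽ)) = ṽ` for `ṽ ∈ U`).  Then for every `ṽ ∈ U`,
`∇(V ∘ Φ)(ṽ) = Φ(ṽ) − ∇F(ṽ)`, where `V(u) = ⟪u, ∇G(u)⟫ − G(u) − F(∇G(u))`: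
the field `A(ṽ) = Φ(ṽ) − ∇F(ṽ)` is conservative with potential `V ∘ Φ`. -/
theorem stmt_10 (N : ℕ) (hN : 1 ≤ N)
    (F G : EuclideanSpace ℝ (Fin N) → ℝ)
    (hG : ContDiff ℝ 2 G) (hF : Differentiable ℝ F)
    (U : Set (EuclideanSpace ℝ (Fin N))) (hU : IsOpen U)
    (Φ : EuclideanSpace ℝ (Fin N) → EuclideanSpace ℝ (Fin N))
    (hΦdiff : ∀ v ∈ U, DifferentiableAt ℝ Φ v)
    (hΦ : ∀ v ∈ U, gradient G (Φ v) = v) :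
    ∀ v ∈ U,
      gradient (fun w =>
          ⟪Φ w, gradient G (Φ w)⟫_ℝ - G (Φ w) - F (gradient G (Φ w))) v
        = Φ v - gradient F v :=
  stmt_10_general N F G hG hF U hU Φ hΦdiff hΦ
end

section
/- Let N ≥ 1, let F : ℝ^N → ℝ be twice continuously differentiable and G : ℝ^N → ℝ differentiable, let U ⊆ ℝ^N be open, and let Ψ : U → ℝ^N be differentiable with ∇F(Ψ(ũ)) = ũ for all ũ ∈ U (Ψ is a right inverse of ∇F). Then for all ũ ∈ U, ∇(Ṽ ∘ Ψ)(ũ) = Ψ(ũ) − ∇G(ũ); i.e. the vector field Ψ(ũ) − ∇G(ũ) is conservative, with potential Ṽ ∘ Ψ. -/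
open scoped InnerProductSpace

/-! On `U` the dual potential composed with `Ψ` is `ũ ↦ ⟪ũ, Ψ ũ⟫ − G ũ − F (Ψ ũ)`, since
`∇F (Ψ ũ) = ũ` there. Differentiating, the two terms involving the derivative of `Ψ`,
`⟪ũ, DΨ ·⟫` and `DF(Ψ ũ) ∘ DΨ = ⟪ũ, DΨ ·⟫`, cancel (the envelope identity of a Legendre
transform), leaving `Ψ ũ − ∇G ũ`. -/

section

variable {E : Type*} [NormedAddCommGroup E] [InnerProductSpace ℝ E] [CompleteSpace E]

theorem hasGradientAt_inner_sub_sub_comp {F G : E → ℝ} {Ψ : E → E} {u g : E}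
    (hΨ : DifferentiableAt ℝ Ψ u) (hF : HasGradientAt F u (Ψ u)) (hG : HasGradientAt G g u) :
    HasGradientAt (fun w => ⟪w, Ψ w⟫_ℝ - G w - F (Ψ w)) (Ψ u - g) u := by
  rw [hasGradientAt_iff_hasFDerivAt] at hF hG ⊢
  refine ((((hasFDerivAt_id u).inner ℝ hΨ.hasFDerivAt).sub hG).sub
    (hF.comp u hΨ.hasFDerivAt)).congr_fderiv ?_
  ext v
  simp only [sub_apply, ContinuousLinearMap.comp_apply,
    ContinuousLinearMap.prod_apply, ContinuousLinearMap.id_apply, fderivInnerCLM_apply,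
    InnerProductSpace.toDual_apply_apply, id_eq, inner_sub_right, real_inner_comm]
  ring

end

theorem stmt_11_general (N : ℕ)
    (F G : EuclideanSpace ℝ (Fin N) → ℝ)
    (hF : ContDiff ℝ 2 F) (hG : Differentiable ℝ G)
    (U : Set (EuclideanSpace ℝ (Fin N))) (hU : IsOpen U)
    (Ψ : EuclideanSpace ℝ (Fin N) → EuclideanSpace ℝ (Fin N))
    (hΨdiff : ∀ u ∈ U, DifferentiableAt ℝ Ψ u)
    (hΨ : ∀ u ∈ U, gradient F (Ψ u) = u) :
    ∀ u ∈ U,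
      gradient (fun w =>
          ⟪gradient F (Ψ w), Ψ w⟫_ℝ - G (gradient F (Ψ w)) - F (Ψ w)) u
        = Ψ u - gradient G u := by
  intro u hu
  have hFgrad : HasGradientAt F u (Ψ u) := by
    simpa only [hΨ u hu] using (hF.differentiable two_ne_zero (Ψ u)).hasGradientAt
  have hlocal : (fun w => ⟪gradient F (Ψ w), Ψ w⟫_ℝ - G (gradient F (Ψ w)) - F (Ψ w))
      =ᶠ[nhds u] fun w => ⟪w, Ψ w⟫_ℝ - G w - F (Ψ w) := by
    filter_upwards [hU.mem_nhds hu] with w hw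
    rw [hΨ w hw]
  exact ((hasGradientAt_inner_sub_sub_comp (hΨdiff u hu) hFgrad
    (hG u).hasGradientAt).congr_of_eventuallyEq hlocal).gradient

/-- Let `F` be twice continuously differentiable, `G`
differentiable, `U` open and `Ψ` a differentiable right inverse of `∇F` on `U`
(`∇F(Ψ(ũ)) = ũ` for `ũ ∈ U`).  Then for every `ũ ∈ U`,
`∇(Ṽ ∘ Ψ)(ũ) = Ψ(ũ) − ∇G(ũ)`, where `Ṽ(v) = ⟪∇F(v), v⟫ − G(∇F(v)) − F(v)`:
the field `Ψ(ũ) − ∇G(ũ)` is conservative with potential `Ṽ ∘ Ψ`. -/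
theorem stmt_11 (N : ℕ) (hN : 1 ≤ N)
    (F G : EuclideanSpace ℝ (Fin N) → ℝ)
    (hF : ContDiff ℝ 2 F) (hG : Differentiable ℝ G)
    (U : Set (EuclideanSpace ℝ (Fin N))) (hU : IsOpen U)
    (Ψ : EuclideanSpace ℝ (Fin N) → EuclideanSpace ℝ (Fin N))
    (hΨdiff : ∀ u ∈ U, DifferentiableAt ℝ Ψ u)
    (hΨ : ∀ u ∈ U, gradient F (Ψ u) = u) :
    ∀ u ∈ U,
      gradient (fun w =>
          ⟪gradient F (Ψ w), Ψ w⟫_ℝ - G (gradient F (Ψ w)) - F (Ψ w)) u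
        = Ψ u - gradient G u :=
  stmt_11_general N F G hF hG U hU Ψ hΨdiff hΨ
end
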